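/- arXiv:2602.04756 — 5 statements merged into one kernel-verified Lean document; each statement's English description precedes it below -/
import Mathlib

section
/- Let A ∈ ℝ^{n×n}, B ∈ ℝ^{n×m}, let Q ∈ ℝ^{n×n} and R ∈ ℝ^{m×m} be positive definite, and let P ∈ ℝ^{n×n} be a symmetric positive definite matrix satisfying the algebraic Riccati equation AᵀP + PA − P B R⁻¹ Bᵀ P + Q = 0. Define a(x) = xᵀPAx and b(x) = xᵀPB. Then for every x ∈ ℝⁿ the Sontag-type control law satisfies u_S(x) = −R⁻¹BᵀPx, i.e. it coincides with the LQR feedback. (In particular, λ(x) = 1 whenever b(x) ≠ 0.) -/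
/-! Evaluating the Riccati equation on `x` gives `s = 2a + q` for `s = b R⁻¹ bᵀ`. Hence the
discriminant `a² + qs` is the perfect square `(s - a)²`, where `s - a = (s + q) / 2 > 0`, and
`λ = (a + (s - a)) / s = 1`. -/

open Matrix

/-- The Sontag-type distortion factor
`λ = (a + √(a² + q·(b R⁻¹ bᵀ))) / (b R⁻¹ bᵀ)`, where `q = xᵀQx` is passed in as
a scalar and `b` is a row vector (represented as `Fin m → ℝ`). -/
noncomputable def sontagLambda {m : ℕ} (R : Matrix (Fin m) (Fin m) ℝ)
    (a q : ℝ) (b : Fin m → ℝ) : ℝ :=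
  (a + Real.sqrt (a ^ 2 + q * (b ⬝ᵥ R⁻¹ *ᵥ b))) / (b ⬝ᵥ R⁻¹ *ᵥ b)

/-- The Sontag-type control law `u_S = −λ R⁻¹ bᵀ` if `b ≠ 0`, and `u_S = 0` if
`b = 0`. -/
noncomputable def sontagControl {m : ℕ} (R : Matrix (Fin m) (Fin m) ℝ)
    (a q : ℝ) (b : Fin m → ℝ) : Fin m → ℝ :=
  if b = 0 then 0 else -(sontagLambda R a q b) • (R⁻¹ *ᵥ b)


section Riccati

variable {ι κ α : Type*} [Fintype ι] [CommRing α]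

theorem vecMul_mul_eq_transpose_mul_mulVec {P : Matrix ι ι α} (hP : Pᵀ = P)
    (B : Matrix ι κ α) (x : ι → α) : x ᵥ* (P * B) = (Bᵀ * P) *ᵥ x := by
  rw [← mulVec_transpose, transpose_mul, hP]

theorem dotProduct_mulVec_eq_of_riccati [Fintype κ] {A P Q : Matrix ι ι α} {B : Matrix ι κ α}
    {S : Matrix κ κ α} (hP : Pᵀ = P) (hRic : Aᵀ * P + P * A - P * B * S * Bᵀ * P + Q = 0)
    (x : ι → α) :
    x ᵥ* (P * B) ⬝ᵥ S *ᵥ (x ᵥ* (P * B)) = 2 * (x ⬝ᵥ (P * A) *ᵥ x) + x ⬝ᵥ Q *ᵥ x := by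
  have hgain : P * B * S * Bᵀ * P = Aᵀ * P + P * A + Q :=
    (sub_eq_zero.mp (by rw [← hRic]; abel)).symm
  have hsymm : x ⬝ᵥ (Aᵀ * P) *ᵥ x = x ⬝ᵥ (P * A) *ᵥ x := by
    simpa only [transpose_mul, hP] using dotProduct_transpose_mulVec (P * A) x x
  calc x ᵥ* (P * B) ⬝ᵥ S *ᵥ (x ᵥ* (P * B))
      = x ⬝ᵥ (P * B * S * Bᵀ * P) *ᵥ x := by
        conv_rhs => rw [Matrix.mul_assoc (P * B * S), Matrix.mul_assoc (P * B), ← mulVec_mulVec,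
          dotProduct_mulVec, ← mulVec_mulVec, ← vecMul_mul_eq_transpose_mul_mulVec hP]
    _ = 2 * (x ⬝ᵥ (P * A) *ᵥ x) + x ⬝ᵥ Q *ᵥ x := by
        rw [hgain, add_mulVec, add_mulVec, dotProduct_add, dotProduct_add, hsymm]
        ring

end Riccati

section Sontag

variable {m : ℕ} {R : Matrix (Fin m) (Fin m) ℝ} {a q : ℝ} {b : Fin m → ℝ}

theorem sontagLambda_eq_one (hs : 0 < b ⬝ᵥ R⁻¹ *ᵥ b) (hq : 0 ≤ q)
    (hsum : b ⬝ᵥ R⁻¹ *ᵥ b = 2 * a + q) : sontagLambda R a q b = 1 := by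
  unfold sontagLambda
  set s := b ⬝ᵥ R⁻¹ *ᵥ b
  have hsquare : a ^ 2 + q * s = (s - a) ^ 2 := by rw [hsum]; ring
  rw [hsquare, Real.sqrt_sq (by linarith), add_sub_cancel, div_self hs.ne']

theorem sontagControl_eq_neg_mulVec (hlam : b ≠ 0 → sontagLambda R a q b = 1) :
    sontagControl R a q b = -(R⁻¹ *ᵥ b) := by
  unfold sontagControl
  split_ifs with hb
  · simp [hb]
  · rw [hlam hb, neg_smul, one_smul]

end Sontag

theorem stmt_0_general {n m : ℕ}
    (A : Matrix (Fin n) (Fin n) ℝ) (B : Matrix (Fin n) (Fin m) ℝ)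
    (Q : Matrix (Fin n) (Fin n) ℝ) (R : Matrix (Fin m) (Fin m) ℝ)
    (P : Matrix (Fin n) (Fin n) ℝ)
    (hQ : Q.PosDef) (hR : R.PosDef) (hPsymm : Pᵀ = P)
    (hRic : Aᵀ * P + P * A - P * B * R⁻¹ * Bᵀ * P + Q = 0) :
    (∀ x : Fin n → ℝ,
        sontagControl R (x ⬝ᵥ (P * A) *ᵥ x) (x ⬝ᵥ Q *ᵥ x) (x ᵥ* (P * B)) =
          -((R⁻¹ * Bᵀ * P) *ᵥ x)) ∧
    (∀ x : Fin n → ℝ, x ᵥ* (P * B) ≠ 0 →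
        sontagLambda R (x ⬝ᵥ (P * A) *ᵥ x) (x ⬝ᵥ Q *ᵥ x) (x ᵥ* (P * B)) = 1) := by
  have hlam (x : Fin n → ℝ) (hx : x ᵥ* (P * B) ≠ 0) :
      sontagLambda R (x ⬝ᵥ (P * A) *ᵥ x) (x ⬝ᵥ Q *ᵥ x) (x ᵥ* (P * B)) = 1 :=
    sontagLambda_eq_one (by simpa using hR.inv.dotProduct_mulVec_pos hx)
      (by simpa using hQ.posSemidef.dotProduct_mulVec_nonneg x)
      (dotProduct_mulVec_eq_of_riccati hPsymm hRic x)
  refine ⟨fun x => ?_, hlam⟩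
  rw [sontagControl_eq_neg_mulVec (hlam x), Matrix.mul_assoc, ← mulVec_mulVec,
    vecMul_mul_eq_transpose_mul_mulVec hPsymm]

/-- for the LTI system `(A, B)` with `P ≻ 0` symmetric solving the
algebraic Riccati equation, using the CLF `V(x) = ½xᵀPx` (so `a(x) = xᵀPAx`,
`b(x) = xᵀPB`, `q(x) = xᵀQx`), the Sontag-type control law coincides with the
LQR feedback `u_S(x) = −R⁻¹BᵀPx` for every `x`; in particular `λ(x) = 1`
whenever `b(x) ≠ 0`. -/
theorem stmt_0 {n m : ℕ}
    (A : Matrix (Fin n) (Fin n) ℝ) (B : Matrix (Fin n) (Fin m) ℝ)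
    (Q : Matrix (Fin n) (Fin n) ℝ) (R : Matrix (Fin m) (Fin m) ℝ)
    (P : Matrix (Fin n) (Fin n) ℝ)
    (hQ : Q.PosDef) (hR : R.PosDef) (hP : P.PosDef) (hPsymm : Pᵀ = P)
    (hRic : Aᵀ * P + P * A - P * B * R⁻¹ * Bᵀ * P + Q = 0) :
    (∀ x : Fin n → ℝ,
        sontagControl R (x ⬝ᵥ (P * A) *ᵥ x) (x ⬝ᵥ Q *ᵥ x) (x ᵥ* (P * B)) =
          -((R⁻¹ * Bᵀ * P) *ᵥ x)) ∧
    (∀ x : Fin n → ℝ, x ᵥ* (P * B) ≠ 0 →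
        sontagLambda R (x ⬝ᵥ (P * A) *ᵥ x) (x ⬝ᵥ Q *ᵥ x) (x ᵥ* (P * B)) = 1) :=
  stmt_0_general A B Q R P hQ hR hPsymm hRic
end

section
/- Let Q ∈ ℝ^{n×n} and R ∈ ℝ^{m×m} be positive definite, let x ∈ ℝⁿ with x ≠ 0, let a ∈ ℝ and let b ∈ ℝ^{1×m} be a row vector, and suppose the pointwise CLF condition holds at x: if b = 0 then a < 0. Then the closed-loop Lyapunov derivative under the Sontag-type control law is strictly negative: a + b·u_S < 0, where u_S = −λ R⁻¹ bᵀ with λ = (a + √(a² + (xᵀQx)(bR⁻¹bᵀ)))/(bR⁻¹bᵀ) if b ≠ 0, and u_S = 0 if b = 0. -/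
/-! For `b ≠ 0`, `λ` is chosen so that `λ · bR⁻¹bᵀ = a + √(a² + q·bR⁻¹bᵀ)`; hence the closed-loop
derivative is `a + b·u_S = -√(a² + q·bR⁻¹bᵀ)`, which is negative because `q = xᵀQx` and
`bR⁻¹bᵀ` are both positive. For `b = 0` it is `a`, negative by the CLF condition. -/

open Matrix

theorem sontagControl_zero {m : ℕ} (R : Matrix (Fin m) (Fin m) ℝ) (a q : ℝ) :
    sontagControl R a q 0 = 0 :=
  if_pos rfl

theorem dotProduct_sontagControl {m : ℕ} {R : Matrix (Fin m) (Fin m) ℝ} {a q : ℝ}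
    {b : Fin m → ℝ} (hc : b ⬝ᵥ R⁻¹ *ᵥ b ≠ 0) :
    b ⬝ᵥ sontagControl R a q b = -(a + √(a ^ 2 + q * (b ⬝ᵥ R⁻¹ *ᵥ b))) := by
  have hb : b ≠ 0 := by rintro rfl; simp at hc
  rw [sontagControl, if_neg hb, dotProduct_smul, smul_eq_mul, sontagLambda, neg_mul,
    div_mul_cancel₀ _ hc]

/-- if `Q, R` are positive definite, `x ≠ 0`, and the pointwise CLF
condition holds at `x` (`b = 0 → a < 0`), then the closed-loop Lyapunov
derivative under the Sontag-type control law is strictly negative: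
`a + b·u_S < 0`. -/
theorem stmt_5 {n m : ℕ}
    (Q : Matrix (Fin n) (Fin n) ℝ) (R : Matrix (Fin m) (Fin m) ℝ)
    (hQ : Q.PosDef) (hR : R.PosDef)
    (x : Fin n → ℝ) (hx : x ≠ 0) (a : ℝ) (b : Fin m → ℝ)
    (hclf : b = 0 → a < 0) :
    a + b ⬝ᵥ sontagControl R a (x ⬝ᵥ Q *ᵥ x) b < 0 := by
  rcases eq_or_ne b 0 with rfl | hb
  · simpa [sontagControl_zero] using hclf rfl
  have hc : 0 < b ⬝ᵥ R⁻¹ *ᵥ b := by simpa using hR.inv.dotProduct_mulVec_pos hb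
  have hq : 0 < x ⬝ᵥ Q *ᵥ x := by simpa using hQ.dotProduct_mulVec_pos hx
  rw [dotProduct_sontagControl hc.ne', neg_add, add_neg_cancel_left, neg_neg_iff_pos]
  exact Real.sqrt_pos.2 (by positivity)
end

section
/- Let f : ℝⁿ → ℝⁿ with f(0) = 0 be differentiable at 0 with derivative A, and let G : ℝⁿ → ℝ^{n×m} be continuous at 0 with G(0) = B. Let Q ∈ ℝ^{n×n} and R ∈ ℝ^{m×m} be positive definite, let P ∈ ℝ^{n×n} be a symmetric positive definite matrix satisfying AᵀP + PA − P B R⁻¹ Bᵀ P + Q = 0, and set K = R⁻¹BᵀP. Then there exists δ > 0 such that for all x ∈ ℝⁿ with 0 < ‖x‖ < δ, the Lyapunov derivative of V(x) = (1/2)xᵀPx under the LQR feedback u = −Kx is strictly negative: xᵀP(f(x) − G(x)Kx) < 0. -/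
/-!
Write the closed-loop vector field as `F x = f x - G x (K x)`. Since `K x` vanishes at `0` and
`G` is continuous there, `F` is differentiable at `0` with derivative `A - B K`. The Riccati
equation turns `2 xᵀ P (A - B K) x` into `-xᵀ Q x - (Bᵀ P x)ᵀ R⁻¹ (Bᵀ P x)`, which is negative
definite, hence bounded above by `-c ‖x‖²` by compactness of the unit sphere. The remainder
`xᵀ P (F x - (A - B K) x)` is `o(‖x‖²)`, so it cannot flip the sign near `0`.
-/

open Matrix Filter Topology Asymptotics

theorem exists_pos_mul_norm_sq_le {E : Type*} [NormedAddCommGroup E] [NormedSpace ℝ E]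
    [FiniteDimensional ℝ E] {q : E → ℝ} (hq : Continuous q)
    (hsmul : ∀ (t : ℝ) x, q (t • x) = t ^ 2 * q x) (hpos : ∀ x ≠ 0, 0 < q x) :
    ∃ c > 0, ∀ x, c * ‖x‖ ^ 2 ≤ q x := by
  have hq0 : q 0 = 0 := by simpa using hsmul 0 0
  rcases subsingleton_or_nontrivial E with hE | hE
  · exact ⟨1, one_pos, fun x => by simp [Subsingleton.elim x 0, hq0]⟩
  obtain ⟨x₀, hx₀, hmin⟩ := (isCompact_sphere (0 : E) 1).exists_isMinOn
    (NormedSpace.sphere_nonempty.2 zero_le_one) hq.continuousOn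
  have hx₀ : ‖x₀‖ = 1 := by simpa using hx₀
  refine ⟨q x₀, hpos x₀ (norm_ne_zero_iff.1 (by simp [hx₀])), fun x => ?_⟩
  rcases eq_or_ne x 0 with rfl | hx
  · simp [hq0]
  have hxpos : 0 < ‖x‖ := norm_pos_iff.2 hx
  have hu : ‖x‖⁻¹ • x ∈ Metric.sphere (0 : E) 1 := by
    simp [norm_smul, hxpos.ne']
  calc q x₀ * ‖x‖ ^ 2 ≤ ‖x‖ ^ 2 * q (‖x‖⁻¹ • x) := by
        rw [mul_comm]; exact mul_le_mul_of_nonneg_left (hmin hu) (sq_nonneg _)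
    _ = q x := by rw [← hsmul, smul_inv_smul₀ hxpos.ne']

theorem exists_pos_forall_apply_neg_of_hasFDerivAt {E : Type*} [NormedAddCommGroup E]
    [NormedSpace ℝ E] [FiniteDimensional ℝ E] (β : E →L[ℝ] E →L[ℝ] ℝ) {F : E → E}
    {L : E →L[ℝ] E} (hF : HasFDerivAt F L 0) (hF0 : F 0 = 0)
    (hL : ∀ x ≠ 0, β x (L x) < 0) :
    ∃ δ > 0, ∀ x, 0 < ‖x‖ → ‖x‖ < δ → β x (F x) < 0 := by
  obtain ⟨c, hc, hcL⟩ := exists_pos_mul_norm_sq_le (q := fun x => -β x (L x)) (by fun_prop)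
    (fun t x => by simp only [map_smul, _root_.smul_apply, smul_eq_mul]; ring)
    (fun x hx => neg_pos.2 (hL x hx))
  have hrem : (fun x => F x - L x) =o[𝓝 0] fun x => x := by
    simpa [hF0] using hF.isLittleO
  have hβrem : (fun x => β x (F x - L x)) =o[𝓝 0] fun x => ‖x‖ ^ 2 := by
    refine (β.isBoundedBilinearMap.isBigO_comp (g := id)
      (h := fun x => F x - L x)).trans_isLittleO ?_
    simpa [sq] using (isBigO_refl (fun x : E => ‖x‖) _).mul_isLittleO hrem.norm_norm
  obtain ⟨δ, hδ, hball⟩ := Metric.eventually_nhds_iff.1 (isLittleO_iff.1 hβrem (half_pos hc))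
  refine ⟨δ, hδ, fun x hx hxδ => ?_⟩
  have hsmall : |β x (F x - L x)| ≤ c / 2 * ‖x‖ ^ 2 := by
    simpa using hball (by simpa using hxδ)
  have hsplit : β x (F x) = β x (L x) + β x (F x - L x) := by simp
  linarith [hcL x, le_abs_self (β x (F x - L x)), mul_pos hc (pow_pos hx 2)]

theorem ContinuousAt.hasFDerivAt_clm_apply_of_eq_zero {E F G : Type*}
    [NormedAddCommGroup E] [NormedSpace ℝ E] [NormedAddCommGroup F] [NormedSpace ℝ F]
    [NormedAddCommGroup G] [NormedSpace ℝ G] {φ : E → F →L[ℝ] G} {g : E → F}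
    {g' : E →L[ℝ] F} {x₀ : E} (hφ : ContinuousAt φ x₀) (hg : HasFDerivAt g g' x₀)
    (hg0 : g x₀ = 0) :
    HasFDerivAt (fun x => φ x (g x)) ((φ x₀).comp g') x₀ := by
  have hrem : HasFDerivAt (fun x => (φ x - φ x₀) (g x)) (0 : E →L[ℝ] G) x₀ := by
    rw [hasFDerivAt_iff_isLittleO]
    have hφ' : (fun x => φ x - φ x₀) =o[𝓝 x₀] fun _ => (1 : ℝ) :=
      (isLittleO_one_iff ℝ).2 (tendsto_sub_nhds_zero_iff.2 hφ)
    have hg' : g =O[𝓝 x₀] fun x => x - x₀ := by simpa [hg0] using hg.isBigO_sub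
    have hprod := hφ'.norm_left.mul_isBigO hg'.norm_norm
    simp only [one_mul, isLittleO_norm_right] at hprod
    simpa [hg0] using isBoundedBilinearMap_apply.isBigO_comp.trans_isLittleO hprod
  convert ((φ x₀).hasFDerivAt.comp x₀ hg).add hrem using 1
  · ext x; simp
  · simp

namespace Matrix

variable {n m : Type*} [Fintype n] [Fintype m]

theorem dotProduct_transpose_mulVec_self (M : Matrix n n ℝ) (x : n → ℝ) :
    x ⬝ᵥ Mᵀ *ᵥ x = x ⬝ᵥ M *ᵥ x := by
  rw [dotProduct_mulVec, vecMul_transpose, dotProduct_comm]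

variable [DecidableEq m]

theorem two_mul_dotProduct_riccati_closedLoop {A P Q : Matrix n n ℝ} {B : Matrix n m ℝ}
    {R : Matrix m m ℝ} (hPsymm : Pᵀ = P)
    (hRic : Aᵀ * P + P * A - P * B * R⁻¹ * Bᵀ * P + Q = 0) (x : n → ℝ) :
    2 * (x ⬝ᵥ P *ᵥ ((A - B * (R⁻¹ * Bᵀ * P)) *ᵥ x)) =
      -(x ⬝ᵥ Q *ᵥ x) - x ⬝ᵥ (P * B * R⁻¹ * Bᵀ * P) *ᵥ x := by
  have hquad := congrArg (fun M => x ⬝ᵥ M *ᵥ x) hRic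
  simp only [add_mulVec, sub_mulVec, dotProduct_add, dotProduct_sub, zero_mulVec,
    dotProduct_zero] at hquad
  have hsymm : x ⬝ᵥ (Aᵀ * P) *ᵥ x = x ⬝ᵥ (P * A) *ᵥ x := by
    rw [← dotProduct_transpose_mulVec_self, transpose_mul, transpose_transpose, hPsymm]
  have hloop : P * (A - B * (R⁻¹ * Bᵀ * P)) = P * A - P * B * R⁻¹ * Bᵀ * P := by
    simp only [Matrix.mul_sub, Matrix.mul_assoc]
  rw [mulVec_mulVec, hloop, sub_mulVec, dotProduct_sub]
  linarith

theorem dotProduct_riccati_closedLoop_neg {A P Q : Matrix n n ℝ} {B : Matrix n m ℝ}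
    {R : Matrix m m ℝ} (hQ : Q.PosDef) (hR : R.PosDef) (hPsymm : Pᵀ = P)
    (hRic : Aᵀ * P + P * A - P * B * R⁻¹ * Bᵀ * P + Q = 0) {x : n → ℝ} (hx : x ≠ 0) :
    x ⬝ᵥ P *ᵥ ((A - B * (R⁻¹ * Bᵀ * P)) *ᵥ x) < 0 := by
  have hQx : 0 < x ⬝ᵥ Q *ᵥ x := by simpa using hQ.dotProduct_mulVec_pos hx
  have hSx : 0 ≤ x ⬝ᵥ (P * B * R⁻¹ * Bᵀ * P) *ᵥ x := by
    have hS := hR.inv.posSemidef.conjTranspose_mul_mul_same (Bᵀ * P)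
    simp only [conjTranspose_eq_transpose_of_trivial, transpose_mul, transpose_transpose,
      hPsymm, ← Matrix.mul_assoc] at hS
    simpa using hS.dotProduct_mulVec_nonneg x
  linarith [two_mul_dotProduct_riccati_closedLoop hPsymm hRic x]

end Matrix

theorem stmt_8_general {n m : ℕ}
    (f : (Fin n → ℝ) → (Fin n → ℝ)) (G : (Fin n → ℝ) → Matrix (Fin n) (Fin m) ℝ)
    (A : Matrix (Fin n) (Fin n) ℝ) (B : Matrix (Fin n) (Fin m) ℝ)
    (hf0 : f 0 = 0)
    (hfA : HasFDerivAt f (LinearMap.toContinuousLinearMap A.mulVecLin) 0)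
    (hGcont : ContinuousAt G 0) (hG0 : G 0 = B)
    (Q : Matrix (Fin n) (Fin n) ℝ) (R : Matrix (Fin m) (Fin m) ℝ)
    (hQ : Q.PosDef) (hR : R.PosDef)
    (P : Matrix (Fin n) (Fin n) ℝ) (hPsymm : Pᵀ = P)
    (hRic : Aᵀ * P + P * A - P * B * R⁻¹ * Bᵀ * P + Q = 0)
    (K : Matrix (Fin m) (Fin n) ℝ) (hK : K = R⁻¹ * Bᵀ * P) :
    ∃ δ > 0, ∀ x : Fin n → ℝ, 0 < ‖x‖ → ‖x‖ < δ →
      x ⬝ᵥ P *ᵥ (f x - G x *ᵥ (K *ᵥ x)) < 0 := by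
  have hGclm : ContinuousAt (fun x => LinearMap.toContinuousLinearMap (G x).mulVecLin) 0 :=
    continuousAt_clm_apply.2 fun y =>
      (continuous_id.matrix_mulVec continuous_const).continuousAt.comp hGcont
  have hfeedback := hGclm.hasFDerivAt_clm_apply_of_eq_zero
    (LinearMap.toContinuousLinearMap K.mulVecLin).hasFDerivAt (map_zero _)
  have hF : HasFDerivAt (fun x => f x - G x *ᵥ (K *ᵥ x))
      (LinearMap.toContinuousLinearMap (A - B * K).mulVecLin) 0 := by
    refine (hfA.sub hfeedback).congr_fderiv ?_
    ext1 v
    simp [hG0, mulVec_mulVec]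
  subst hK
  simpa [toLinearMap₂'_apply'] using exists_pos_forall_apply_neg_of_hasFDerivAt
    (toLinearMap₂' ℝ P).toContinuousBilinearMap hF (by simp [hf0]) fun x hx => by
      simpa only [LinearMap.toContinuousBilinearMap_apply, toLinearMap₂'_apply',
        LinearMap.coe_toContinuousLinearMap', mulVecLin_apply] using
        dotProduct_riccati_closedLoop_neg hQ hR hPsymm hRic hx

/-- for the nonlinear input-affine system `ẋ = f(x) + G(x)u` with
`f(0) = 0`, `f` differentiable at `0` with derivative `A`, `G` continuous at `0`
with `G(0) = B`, and `P ≻ 0` symmetric solving the Riccati equation, the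
Lyapunov derivative of `V(x) = ½xᵀPx` under the LQR feedback `u = −Kx`
(`K = R⁻¹BᵀP`) is strictly negative for all `x` with `0 < ‖x‖ < δ`, for some
`δ > 0`. -/
theorem stmt_8 {n m : ℕ}
    (f : (Fin n → ℝ) → (Fin n → ℝ)) (G : (Fin n → ℝ) → Matrix (Fin n) (Fin m) ℝ)
    (A : Matrix (Fin n) (Fin n) ℝ) (B : Matrix (Fin n) (Fin m) ℝ)
    (hf0 : f 0 = 0)
    (hfA : HasFDerivAt f (LinearMap.toContinuousLinearMap A.mulVecLin) 0)
    (hGcont : ContinuousAt G 0) (hG0 : G 0 = B)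
    (Q : Matrix (Fin n) (Fin n) ℝ) (R : Matrix (Fin m) (Fin m) ℝ)
    (hQ : Q.PosDef) (hR : R.PosDef)
    (P : Matrix (Fin n) (Fin n) ℝ) (hP : P.PosDef) (hPsymm : Pᵀ = P)
    (hRic : Aᵀ * P + P * A - P * B * R⁻¹ * Bᵀ * P + Q = 0)
    (K : Matrix (Fin m) (Fin n) ℝ) (hK : K = R⁻¹ * Bᵀ * P) :
    ∃ δ > 0, ∀ x : Fin n → ℝ, 0 < ‖x‖ → ‖x‖ < δ →
      x ⬝ᵥ P *ᵥ (f x - G x *ᵥ (K *ᵥ x)) < 0 :=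
  stmt_8_general f G A B hf0 hfA hGcont hG0 Q R hQ hR P hPsymm hRic K hK
end

section
/- Let f : ℝⁿ → ℝⁿ, G : ℝⁿ → ℝ^{n×m}, let T : ℝⁿ → ℝⁿ be a map with T(0) = 0 such that T(x) ≠ 0 for all x ≠ 0, and suppose T is differentiable with Jacobian DT(x) at every x and that there exist Ã ∈ ℝ^{n×n}, B̃ ∈ ℝ^{n×m}, ψ : ℝⁿ → ℝ^m and γ : ℝⁿ → ℝ^{m×m} with γ(z) invertible for all z, such that for all x ∈ ℝⁿ and u ∈ ℝ^m: DT(x)·(f(x) + G(x)u) = Ã T(x) + B̃ (ψ(T(x)) + γ(T(x)) u). Let P̃ ∈ ℝ^{n×n} be symmetric and suppose there exists ε > 0 such that for all z ∈ ℝⁿ with 0 < ‖z‖ < ε there exists v ∈ ℝ^m with zᵀP̃(Ãz + B̃v) < 0. Then V(x) = (1/2)T(x)ᵀP̃T(x) satisfies the global CLF condition for the system ẋ = f(x) + G(x)u: for every x ≠ 0 there exists u ∈ ℝ^m such that T(x)ᵀ P̃ DT(x) (f(x) + G(x)u) < 0. -/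
open Matrix

/-- global CLF from feedback linearization. Suppose `T(0) = 0`,
`T(x) ≠ 0` for `x ≠ 0`, `T` is differentiable with Jacobian `DT(x)` everywhere,
and in coordinates `z = T(x)` the input-affine system `ẋ = f(x) + G(x)u` reads
`ż = Ãz + B̃(ψ(z) + γ(z)u)` with `γ(z)` invertible for all `z`. If the CLF
condition for `V(z) = ½zᵀP̃z` along the linear system `ż = Ãz + B̃v` holds for
all `z` with `0 < ‖z‖ < ε` for some `ε > 0`, then `V(x) = ½T(x)ᵀP̃T(x)`
satisfies the global CLF condition for the original system: for every `x ≠ 0`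
there is `u` with `T(x)ᵀ P̃ DT(x)(f(x) + G(x)u) < 0`. -/
theorem stmt_13 {n m : ℕ}
    (f : (Fin n → ℝ) → (Fin n → ℝ)) (G : (Fin n → ℝ) → Matrix (Fin n) (Fin m) ℝ)
    (T : (Fin n → ℝ) → (Fin n → ℝ))
    (hT0 : T 0 = 0) (hTne : ∀ x : Fin n → ℝ, x ≠ 0 → T x ≠ 0)
    (DT : (Fin n → ℝ) → Matrix (Fin n) (Fin n) ℝ)
    (hTd : ∀ x : Fin n → ℝ,
      HasFDerivAt T (LinearMap.toContinuousLinearMap (DT x).mulVecLin) x)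
    (At : Matrix (Fin n) (Fin n) ℝ) (Bt : Matrix (Fin n) (Fin m) ℝ)
    (ψ : (Fin n → ℝ) → (Fin m → ℝ)) (γ : (Fin n → ℝ) → Matrix (Fin m) (Fin m) ℝ)
    (hγ : ∀ z : Fin n → ℝ, IsUnit (γ z).det)
    (hlin : ∀ (x : Fin n → ℝ) (u : Fin m → ℝ),
      DT x *ᵥ (f x + G x *ᵥ u) = At *ᵥ T x + Bt *ᵥ (ψ (T x) + γ (T x) *ᵥ u))
    (Pt : Matrix (Fin n) (Fin n) ℝ) (hPtsymm : Ptᵀ = Pt)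
    (hloc : ∃ ε > 0, ∀ z : Fin n → ℝ, 0 < ‖z‖ → ‖z‖ < ε →
      ∃ v : Fin m → ℝ, z ⬝ᵥ Pt *ᵥ (At *ᵥ z + Bt *ᵥ v) < 0) :
    ∀ x : Fin n → ℝ, x ≠ 0 →
      ∃ u : Fin m → ℝ, T x ⬝ᵥ Pt *ᵥ (DT x *ᵥ (f x + G x *ᵥ u)) < 0 := by
  obtain ⟨ε, hε, hloc⟩ := hloc
  intro x hx
  set z := T x with hz
  have hzne : z ≠ 0 := hTne x hx
  have hznorm : 0 < ‖z‖ := norm_pos_iff.mpr hzne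
  set c : ℝ := ε / (2 * ‖z‖) with hc
  have hcpos : 0 < c := div_pos hε (by positivity)
  have hz' : ‖c • z‖ = ε / 2 := by
    rw [norm_smul, Real.norm_eq_abs, abs_of_pos hcpos, hc]
    field_simp
  obtain ⟨v, hv⟩ := hloc (c • z) (by rw [hz']; positivity)
    (by rw [hz']; linarith)
  set w : Fin m → ℝ := c⁻¹ • v with hw
  -- the scaled CLF inequality
  have key : z ⬝ᵥ Pt *ᵥ (At *ᵥ z + Bt *ᵥ w) < 0 := by
    have ha : (c • z) ⬝ᵥ Pt *ᵥ (At *ᵥ (c • z) + Bt *ᵥ v)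
        = c * (c * (z ⬝ᵥ Pt *ᵥ (At *ᵥ z)) + z ⬝ᵥ Pt *ᵥ (Bt *ᵥ v)) := by
      simp [Matrix.mulVec_add, Matrix.mulVec_smul, dotProduct_add, smul_dotProduct,
        dotProduct_smul, smul_eq_mul]
      ring
    have hb : z ⬝ᵥ Pt *ᵥ (At *ᵥ z + Bt *ᵥ w)
        = z ⬝ᵥ Pt *ᵥ (At *ᵥ z) + c⁻¹ * (z ⬝ᵥ Pt *ᵥ (Bt *ᵥ v)) := by
      simp [hw, Matrix.mulVec_add, Matrix.mulVec_smul, dotProduct_add, smul_dotProduct,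
        dotProduct_smul, smul_eq_mul]
    rw [ha] at hv
    rw [hb]
    have hcne : c ≠ 0 := ne_of_gt hcpos
    have h2 : c * (z ⬝ᵥ Pt *ᵥ (At *ᵥ z)) + z ⬝ᵥ Pt *ᵥ (Bt *ᵥ v) < 0 := by
      nlinarith
    have h3 : z ⬝ᵥ Pt *ᵥ (At *ᵥ z) + c⁻¹ * (z ⬝ᵥ Pt *ᵥ (Bt *ᵥ v)) < 0 := by
      have := mul_pos (inv_pos.mpr hcpos) (neg_pos.mpr h2)
      have heq : c⁻¹ * -(c * (z ⬝ᵥ Pt *ᵥ (At *ᵥ z)) + z ⬝ᵥ Pt *ᵥ (Bt *ᵥ v))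
          = -(z ⬝ᵥ Pt *ᵥ (At *ᵥ z) + c⁻¹ * (z ⬝ᵥ Pt *ᵥ (Bt *ᵥ v))) := by
        field_simp
      rw [heq] at this
      linarith
    exact h3
  -- choose u to realize v = ψ z + γ z u
  refine ⟨(γ z)⁻¹ *ᵥ (w - ψ z), ?_⟩
  have hγz := hγ z
  have hcomp : ψ z + γ z *ᵥ ((γ z)⁻¹ *ᵥ (w - ψ z)) = w := by
    rw [Matrix.mulVec_mulVec, Matrix.mul_nonsing_inv _ hγz, Matrix.one_mulVec]
    simp
  rw [hlin x _, ← hz, hcomp]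
  exact key
end

section
/- Let Q ∈ ℝ^{n×n} and R ∈ ℝ^{m×m} be positive definite, fix x ∈ ℝⁿ, let a* ∈ ℝ and let b* ∈ ℝ^{1×m} be a row vector with b* ≠ 0, and suppose the Hamilton–Jacobi–Bellman relation 0 = (1/2)xᵀQx + a* − (1/2) b* R⁻¹ (b*)ᵀ holds. Then λ = (a* + √((a*)² + (xᵀQx)·(b*R⁻¹(b*)ᵀ))) / (b*R⁻¹(b*)ᵀ) = 1, and hence the Sontag-type control u_S = −λ R⁻¹ (b*)ᵀ equals the optimal feedback u* = −R⁻¹ (b*)ᵀ. -/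
open Matrix

/-- if the Hamilton–Jacobi–Bellman relation
`0 = ½xᵀQx + a* − ½ b* R⁻¹ (b*)ᵀ` holds with `b* ≠ 0` (and `Q, R` positive
definite), then `λ = (a* + √((a*)² + (xᵀQx)·(b* R⁻¹ (b*)ᵀ)))/(b* R⁻¹ (b*)ᵀ) = 1`
and the Sontag-type control `u_S = −λ R⁻¹ (b*)ᵀ` equals the optimal feedback
`u* = −R⁻¹ (b*)ᵀ`. -/
theorem stmt_14 {n m : ℕ}
    (Q : Matrix (Fin n) (Fin n) ℝ) (R : Matrix (Fin m) (Fin m) ℝ)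
    (hQ : Q.PosDef) (hR : R.PosDef)
    (x : Fin n → ℝ) (astar : ℝ) (bstar : Fin m → ℝ) (hb : bstar ≠ 0)
    (hHJB : 0 = (1 / 2) * (x ⬝ᵥ Q *ᵥ x) + astar -
      (1 / 2) * (bstar ⬝ᵥ R⁻¹ *ᵥ bstar)) :
    sontagLambda R astar (x ⬝ᵥ Q *ᵥ x) bstar = 1 ∧
    sontagControl R astar (x ⬝ᵥ Q *ᵥ x) bstar = -(R⁻¹ *ᵥ bstar) := by
  set q : ℝ := x ⬝ᵥ Q *ᵥ x with hq
  set β : ℝ := bstar ⬝ᵥ R⁻¹ *ᵥ bstar with hβ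
  have hβpos : 0 < β := by
    have := hR.inv.re_dotProduct_pos hb
    simpa using this
  have hqnn : 0 ≤ q := by
    have := hQ.posSemidef.re_dotProduct_nonneg x
    simpa using this
  have hbe : β = q + 2 * astar := by linarith
  have hsq : astar ^ 2 + q * β = (astar + q) ^ 2 := by rw [hbe]; ring
  have haq : 0 ≤ astar + q := by nlinarith
  have hsqrt : Real.sqrt (astar ^ 2 + q * β) = astar + q := by
    rw [hsq, Real.sqrt_sq haq]
  have hlam : sontagLambda R astar q bstar = 1 := by
    rw [sontagLambda, ← hβ, hsqrt]
    field_simp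
    linarith
  refine ⟨hlam, ?_⟩
  rw [sontagControl, if_neg hb, hlam]
  simp
end
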